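/- For the constant-magnetic-field system in the Darboux–Haantjes chart where H = (1/2)[(p₁ − b q²)² + p₂² + p₃²], the combinations H̃₁ = 2H − p₁², H̃₂ = p₁, H̃₃ = p₃² form a Stäckel system: there exists a Stäckel matrix S(q) (namely S = [[0,1,0],[1,2bq²,−1],[0,0,1]]) and functions f_k(q^k,p_k) such that H̃_j = Σ_k (S⁻¹)_{jk} f_k; in particular H̃₁ = f₂ − 2 b q² f₁ + f₃ with f₁ = p₁, f₂ = p₂² + b²(q²)², f₃ = p₃². -/
import Mathlib


noncomputable section

/-- In the Darboux–Haantjes chart for the constant-field system, where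
H = ½[(p₁ − bq²)² + p₂² + p₃²], the combinations H̃₁ = 2H − p₁², H̃₂ = p₁, H̃₃ = p₃²
form a Stäckel system: there are a Stäckel matrix S(q) (namely [[0,1,0],[1,2bq²,−1],[0,0,1]],
whose i-th row depends only on q^i and with det S = −1) and functions f_k(q^k,p_k)
such that H̃_j = Σ_k (S⁻¹)_{jk} f_k(q^k,p_k).
Coordinates on ℝ⁶: (q¹,q²,q³,p₁,p₂,p₃) = (v 0,…,v 5). -/
theorem stackel_system_constant_field (b : ℝ)
    (H : (Fin 6 → ℝ) → ℝ)
    (hH : H = fun v => (1/2) * ((v 3 - b * v 1)^2 + (v 4)^2 + (v 5)^2))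
    (Ht : (Fin 6 → ℝ) → Fin 3 → ℝ)
    (hHt : Ht = fun v => ![2 * H v - (v 3)^2, v 3, (v 5)^2]) :
    ∃ S : (Fin 6 → ℝ) → Matrix (Fin 3) (Fin 3) ℝ,
    ∃ f : Fin 3 → ℝ → ℝ → ℝ,
      (∀ v, S v = !![0, 1, 0; 1, 2 * b * v 1, -1; 0, 0, 1]) ∧
      (f 0 = fun _ p => p) ∧
      (f 1 = fun q p => p^2 + b^2 * q^2) ∧
      (f 2 = fun _ p => p^2) ∧
      (∀ v, (S v).det = -1) ∧
      (∀ v, ∀ j : Fin 3,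
        Ht v j = ∑ k : Fin 3, ((S v)⁻¹ j k) * f k (v ⟨k.1, by omega⟩) (v ⟨k.1 + 3, by omega⟩)) := by
  refine ⟨fun v => !![0, 1, 0; 1, 2 * b * v 1, -1; 0, 0, 1],
    ![fun _ p => p, fun q p => p^2 + b^2 * q^2, fun _ p => p^2],
    fun _ => rfl, rfl, rfl, rfl, ?_, ?_⟩
  · intro v
    simp [Matrix.det_fin_three]
  · intro v j
    have hinv : (!![0, 1, 0; 1, 2 * b * v 1, -1; 0, 0, 1] : Matrix (Fin 3) (Fin 3) ℝ)⁻¹ =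
        !![-(2 * b * v 1), 1, 1; 1, 0, 0; 0, 0, 1] := by
      apply Matrix.inv_eq_right_inv
      rw [Matrix.mul_fin_three, Matrix.one_fin_three]
      norm_num
    subst hHt hH
    rw [hinv]
    fin_cases j <;>
      simp [Fin.sum_univ_three] <;> ring
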